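/- Let 𝔇 ≥ 1 be an integer, p an odd prime not dividing 𝔇 such that −𝔇 is NOT a square modulo p, and x, y, n integers with p ∤ n. Then the number of quadruples (c₁, c₂, d₁, d₂) ∈ (ℤ/pℤ)⁴ whose associated pair (c, d) in R = ℤ[√−𝔇]/(p) is unimodular and which satisfy A·x² + B·y² + C·x + D·y + E ≡ n (mod p) equals p³ − p; consequently this count divided by the total number p⁴ − 1 of unimodular pairs equals p/(p² + 1). Here A = c₁² + 𝔇c₂², B = 𝔇A, C = 2(c₁d₁ + 𝔇c₂d₂), D = 2𝔇(c₁d₂ − c₂d₁), E = A + d₁² + 𝔇d₂². -/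

import Mathlib

/-- The ring `ℤ[√−𝔇]`, modelled as `ℤ[X]/(X² + 𝔇)`. -/
abbrev ZsqrtNeg (𝔇 : ℕ) : Type := AdjoinRoot ((Polynomial.X : Polynomial ℤ) ^ 2 + Polynomial.C (𝔇 : ℤ))

/-- The quotient ring `R = ℤ[√−𝔇]/(p)`. -/
abbrev Rmod (𝔇 p : ℕ) : Type := ZsqrtNeg 𝔇 ⧸ Ideal.span {(p : ZsqrtNeg 𝔇)}

/-- The image of `u + v√−𝔇` in `R = ℤ[√−𝔇]/(p)`. -/
noncomputable def toRmod (𝔇 p : ℕ) (u v : ℤ) : Rmod 𝔇 p :=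
  Ideal.Quotient.mk (Ideal.span {(p : ZsqrtNeg 𝔇)})
    ((u : ZsqrtNeg 𝔇) + (v : ZsqrtNeg 𝔇) * AdjoinRoot.root _)

/-- A quadruple `(c₁, c₂, d₁, d₂) ∈ (ℤ/pℤ)⁴` is unimodular if the associated pair
`(c₁ + c₂√−𝔇, d₁ + d₂√−𝔇)` in `R = ℤ[√−𝔇]/(p)` admits `a, b ∈ R` with `a·d − b·c = 1`. -/
def IsUnimodular (𝔇 p : ℕ) (v : ZMod p × ZMod p × ZMod p × ZMod p) : Prop :=
  ∃ a b : Rmod 𝔇 p,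
    a * toRmod 𝔇 p (v.2.2.1.val : ℤ) (v.2.2.2.val : ℤ)
      - b * toRmod 𝔇 p (v.1.val : ℤ) (v.2.1.val : ℤ) = 1

/-- The congruence `A x² + B y² + C x + D y + E = n` in `ℤ/pℤ` for the quadruple
`v = (c₁, c₂, d₁, d₂)`. -/
def QuadCongr (𝔇 p : ℕ) (x y n : ℤ) (v : ZMod p × ZMod p × ZMod p × ZMod p) : Prop :=
  (v.1 ^ 2 + (𝔇 : ZMod p) * v.2.1 ^ 2) * (x : ZMod p) ^ 2
    + ((𝔇 : ZMod p) * (v.1 ^ 2 + (𝔇 : ZMod p) * v.2.1 ^ 2)) * (y : ZMod p) ^ 2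
    + (2 * (v.1 * v.2.2.1 + (𝔇 : ZMod p) * v.2.1 * v.2.2.2)) * (x : ZMod p)
    + (2 * (𝔇 : ZMod p) * (v.1 * v.2.2.2 - v.2.1 * v.2.2.1)) * (y : ZMod p)
    + ((v.1 ^ 2 + (𝔇 : ZMod p) * v.2.1 ^ 2) + v.2.2.1 ^ 2 + (𝔇 : ZMod p) * v.2.2.2 ^ 2)
    = (n : ZMod p)

/-!
Write `δ` for `𝔇 mod p` and `N(a, b) = a² + δb²` for the norm form of `𝔽_p[√-δ]`. Expanding
norms shows that the congruence says `N(c) + N(d + cz) = n` with `z = x + y√-𝔇` (products taken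
in `𝔽_p[√-δ]`), so after the shear `(c, d) ↦ (c, d + cz)` we count pairs with `N(c) + N(d') = n`.
Since `-δ` is not a square, `N` is anisotropic, and being multiplicative and surjective it takes
every nonzero value exactly `p + 1` times; hence the count is
`(p + 1) + (p² - p - 1)(p + 1) = p³ - p`. Unimodularity is automatic: `n ≠ 0` forces
`(c, d) ≠ 0`, and a nonzero `u + v√-𝔇` is a unit of `R`, its norm `u² + 𝔇v²` being a unit mod `p`.
-/

open Finset Polynomial FiniteField

section NormForm

variable {R : Type*} [CommRing R] {δ : R}

def normForm (δ : R) (c : R × R) : R := c.1 ^ 2 + δ * c.2 ^ 2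

/-- Multiplication in `R[√-δ]`: `(c₁ + c₂√-δ)(e₁ + e₂√-δ)`. -/
def normMul (δ : R) (c e : R × R) : R × R := (c.1 * e.1 - δ * c.2 * e.2, c.1 * e.2 + c.2 * e.1)

lemma normForm_normMul (c e : R × R) :
    normForm δ (normMul δ c e) = normForm δ c * normForm δ e := by
  simp only [normForm, normMul]; ring

lemma normMul_sub_normMul (c c' e : R × R) :
    normMul δ c e - normMul δ c' e = normMul δ (c - c') e := by
  simp only [normMul, Prod.fst_sub, Prod.snd_sub, Prod.mk_sub_mk]; ring_nf

/-- `(c, d) ↦ (c, d + c z)`, where `z = (z₁, z₂)` stands for `z₁ + z₂ √-δ`. -/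
def shearEquiv (δ : R) (z : R × R) : R × R × R × R ≃ (R × R) × (R × R) where
  toFun v := ((v.1, v.2.1), v.2.2 + normMul δ (v.1, v.2.1) z)
  invFun w := (w.1.1, w.1.2, w.2 - normMul δ w.1 z)
  left_inv v := by simp
  right_inv w := by simp

end NormForm

section Field

variable {F : Type*} [Field F] {δ : F}

lemma ne_zero_of_not_isSquare_neg (hδ : ¬IsSquare (-δ)) : δ ≠ 0 := by
  rintro rfl; exact hδ ⟨0, by simp⟩

lemma normForm_eq_zero_iff (hδ : ¬IsSquare (-δ)) {c : F × F} : normForm δ c = 0 ↔ c = 0 := by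
  refine ⟨fun h ↦ ?_, by rintro rfl; simp [normForm]⟩
  unfold normForm at h
  by_cases hc₂ : c.2 = 0
  · have hc₁ : c.1 = 0 := by simpa [hc₂] using h
    exact Prod.ext hc₁ hc₂
  · refine absurd ⟨c.1 / c.2, ?_⟩ hδ
    field_simp
    linear_combination -h

lemma normMul_left_injective (hδ : ¬IsSquare (-δ)) {e : F × F} (he : normForm δ e ≠ 0) :
    Function.Injective (normMul δ · e) := by
  intro c c' (h : normMul δ c e = normMul δ c' e)
  have : normForm δ (c - c') * normForm δ e = 0 := by
    rw [← normForm_normMul, ← normMul_sub_normMul, h, sub_self, normForm_eq_zero_iff hδ]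
  rw [← sub_eq_zero, ← normForm_eq_zero_iff hδ]
  exact (mul_eq_zero.mp this).resolve_right he

variable [Fintype F]

lemma ringChar_ne_two_of_not_isSquare (hδ : ¬IsSquare δ) : ringChar F ≠ 2 :=
  fun h ↦ hδ (isSquare_of_char_two h δ)

lemma normForm_surjective (hδ : δ ≠ 0) (hF : ringChar F ≠ 2) :
    Function.Surjective (normForm δ) := by
  intro t
  obtain ⟨a, b, hab⟩ := exists_root_sum_quadratic (f := X ^ 2) (g := C δ * X ^ 2 - C t)
    (by simp) (by compute_degree!) (odd_card_of_char_ne_two hF)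
  simp only [eval_pow, eval_X, eval_sub, eval_mul, eval_C] at hab
  exact ⟨(a, b), by linear_combination (norm := (simp only [normForm]; ring_nf)) hab⟩

variable [DecidableEq F]

lemma card_normForm_fiber_le (hδ : ¬IsSquare (-δ)) {t u : F} (ht : t ≠ 0) (hu : u ≠ 0) :
    #{c | normForm δ c = t} ≤ #{c | normForm δ c = u} := by
  obtain ⟨e, he⟩ := normForm_surjective (ne_zero_of_not_isSquare_neg hδ)
    (ringChar_ne_two_of_not_isSquare hδ) (u / t)
  have he₀ : normForm δ e ≠ 0 := he ▸ div_ne_zero hu ht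
  -- multiplication by `e` maps the fibre over `t` injectively into the fibre over `u`
  refine card_le_card_of_injOn (normMul δ · e) (fun c hc ↦ ?_)
    (normMul_left_injective hδ he₀).injOn
  rw [mem_coe, mem_filter_univ] at hc ⊢
  rw [normForm_normMul, hc, he, mul_div_cancel₀ _ ht]

lemma card_normForm_fiber_zero (hδ : ¬IsSquare (-δ)) : #{c | normForm δ c = 0} = 1 := by
  simp [normForm_eq_zero_iff hδ, filter_eq']

lemma card_normForm_fiber_of_ne_zero (hδ : ¬IsSquare (-δ)) {t : F} (ht : t ≠ 0) :
    #{c | normForm δ c = t} = Fintype.card F + 1 := by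
  set N := #{c | normForm δ c = t}
  have hconst : ∀ u ∈ univ.erase (0 : F), #{c | normForm δ c = u} = N := fun u hu ↦
    le_antisymm (card_normForm_fiber_le hδ (ne_of_mem_erase hu) ht)
      (card_normForm_fiber_le hδ ht (ne_of_mem_erase hu))
  have htotal : ∑ u : F, #{c | normForm δ c = u} = Fintype.card F ^ 2 := by
    rw [← card_eq_sum_card_fiberwise (fun _ _ ↦ mem_univ _), card_univ, Fintype.card_prod, sq]
  rw [← add_sum_erase _ _ (mem_univ 0), card_normForm_fiber_zero hδ, sum_congr rfl hconst,
    sum_const, card_erase_of_mem (mem_univ _), card_univ, smul_eq_mul] at htotal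
  have hq : 1 < Fintype.card F := Fintype.one_lt_card
  generalize Fintype.card F = q at hq htotal ⊢
  obtain ⟨m, rfl⟩ : ∃ m, q = m + 1 := ⟨q - 1, by omega⟩
  refine Nat.eq_of_mul_eq_mul_left (show 0 < m by omega) ?_
  simp only [add_tsub_cancel_right] at htotal
  linear_combination htotal

lemma card_normForm_add_normForm_eq (hδ : ¬IsSquare (-δ)) {n : F} (hn : n ≠ 0) :
    #{w : (F × F) × (F × F) | normForm δ w.1 + normForm δ w.2 = n}
      = Fintype.card F ^ 3 - Fintype.card F := by
  have hfiber (c : F × F) : #{d | normForm δ c + normForm δ d = n}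
      = if normForm δ c = n then 1 else Fintype.card F + 1 := by
    simp_rw [← eq_sub_iff_add_eq']
    split_ifs with hc
    · rw [hc, sub_self, card_normForm_fiber_zero hδ]
    · exact card_normForm_fiber_of_ne_zero hδ (sub_ne_zero.mpr (Ne.symm hc))
  have hsplit := card_filter_add_card_filter_not (s := univ) (fun c : F × F ↦ normForm δ c = n)
  rw [card_filter, Fintype.sum_prod_type]
  simp_rw [← card_filter, hfiber, sum_ite, sum_const, smul_eq_mul, mul_one]
  rw [card_univ, Fintype.card_prod, card_normForm_fiber_of_ne_zero hδ hn] at hsplit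
  rw [card_normForm_fiber_of_ne_zero hδ hn]
  refine eq_tsub_of_add_eq ?_
  linear_combination (Fintype.card F + 1) * hsplit

end Field

lemma AdjoinRoot.root_X_sq_add_C_sq {R : Type*} [CommRing R] (d : R) :
    root (X ^ 2 + C d) ^ 2 = -of (X ^ 2 + C d) d := by
  have h := eval₂_root (X ^ 2 + C d)
  rw [eval₂_add, eval₂_pow, eval₂_X, eval₂_C] at h
  exact eq_neg_of_add_eq_zero_left h

lemma isUnit_intCast_of_isUnit_zmod {S : Type*} [CommRing S] {p : ℕ} (hS : (p : S) = 0) {N : ℤ}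
    (hN : IsUnit (N : ZMod p)) : IsUnit (N : S) := by
  obtain ⟨m, hm⟩ := hN.exists_right_inv
  obtain ⟨k, hk⟩ : (p : ℤ) ∣ N * m.cast - 1 := by
    rw [← ZMod.intCast_zmod_eq_zero_iff_dvd]
    push_cast
    rw [hm, sub_self]
  refine IsUnit.of_mul_eq_one (m.cast : ℤ) ?_
  rw [← Int.cast_mul, eq_add_of_sub_eq hk]
  push_cast
  rw [hS, zero_mul, zero_add]

variable {𝔇 p : ℕ}

lemma toRmod_mul_toRmod_neg (u v : ℤ) :
    toRmod 𝔇 p u v * toRmod 𝔇 p u (-v) = ((u ^ 2 + 𝔇 * v ^ 2 : ℤ) : Rmod 𝔇 p) := by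
  have hroot := AdjoinRoot.root_X_sq_add_C_sq ((𝔇 : ℕ) : ℤ)
  rw [eq_intCast (AdjoinRoot.of _)] at hroot
  rw [toRmod, toRmod, ← map_mul,
    ← map_intCast (Ideal.Quotient.mk (Ideal.span {(p : ZsqrtNeg 𝔇)}))]
  congr 1
  push_cast at hroot ⊢
  linear_combination (-(v : ZsqrtNeg 𝔇) ^ 2) * hroot

lemma quadCongr_iff (x y n : ℤ) (v : ZMod p × ZMod p × ZMod p × ZMod p) :
    QuadCongr 𝔇 p x y n v ↔
      normForm (𝔇 : ZMod p) (shearEquiv (𝔇 : ZMod p) (x, y) v).1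
        + normForm (𝔇 : ZMod p) (shearEquiv (𝔇 : ZMod p) (x, y) v).2 = n := by
  simp only [QuadCongr, shearEquiv, normForm, normMul, Equiv.coe_fn_mk, Prod.fst_add,
    Prod.snd_add]
  constructor <;> intro h <;> linear_combination h

variable [Fact p.Prime]

lemma isUnit_toRmod (hns : ¬IsSquare (-(𝔇 : ZMod p))) {c : ZMod p × ZMod p} (hc : c ≠ 0) :
    IsUnit (toRmod 𝔇 p c.1.val c.2.val) := by
  have hnorm : (((c.1.val : ℤ) ^ 2 + 𝔇 * (c.2.val : ℤ) ^ 2 : ℤ) : ZMod p)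
      = normForm (𝔇 : ZMod p) c := by
    push_cast
    simp only [ZMod.natCast_val, ZMod.cast_id', id, normForm]
  refine isUnit_of_mul_isUnit_left (y := toRmod 𝔇 p c.1.val (-c.2.val)) ?_
  rw [toRmod_mul_toRmod_neg]
  refine isUnit_intCast_of_isUnit_zmod (p := p) ?_ ?_
  · exact Ideal.Quotient.eq_zero_iff_mem.mpr (Ideal.mem_span_singleton_self _)
  · rw [hnorm, isUnit_iff_ne_zero, Ne, normForm_eq_zero_iff hns]
    exact hc

lemma isUnimodular_of_ne_zero (hns : ¬IsSquare (-(𝔇 : ZMod p)))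
    {v : ZMod p × ZMod p × ZMod p × ZMod p} (hv : v ≠ 0) : IsUnimodular 𝔇 p v := by
  by_cases hd : (v.2.2.1, v.2.2.2) = 0
  · have hc : (v.1, v.2.1) ≠ 0 := fun hc ↦ hv (by simp_all [Prod.ext_iff])
    obtain ⟨w, hw⟩ := (isUnit_toRmod hns hc).exists_left_inv
    exact ⟨0, -w, by rw [zero_mul, zero_sub, neg_mul, neg_neg, hw]⟩
  · obtain ⟨w, hw⟩ := (isUnit_toRmod hns hd).exists_left_inv
    exact ⟨w, 0, by rw [zero_mul, sub_zero, hw]⟩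

lemma isUnimodular_of_quadCongr (hns : ¬IsSquare (-(𝔇 : ZMod p))) {x y n : ℤ}
    (hn : (n : ZMod p) ≠ 0) {v : ZMod p × ZMod p × ZMod p × ZMod p}
    (hv : QuadCongr 𝔇 p x y n v) : IsUnimodular 𝔇 p v := by
  refine isUnimodular_of_ne_zero hns ?_
  rintro rfl
  exact hn (by simpa [QuadCongr] using hv.symm)

theorem unimodular_solution_count_nondiv_general (𝔇 : ℕ) (p : ℕ) (hp : p.Prime)
    (hns : ¬ IsSquare (-(𝔇 : ZMod p)))
    (x y n : ℤ) (hn : ¬ ((p : ℤ) ∣ n)) :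
    Nat.card {v : ZMod p × ZMod p × ZMod p × ZMod p //
        IsUnimodular 𝔇 p v ∧ QuadCongr 𝔇 p x y n v} = p ^ 3 - p ∧
    (Nat.card {v : ZMod p × ZMod p × ZMod p × ZMod p //
        IsUnimodular 𝔇 p v ∧ QuadCongr 𝔇 p x y n v} : ℚ) / ((p : ℚ) ^ 4 - 1)
      = (p : ℚ) / ((p : ℚ) ^ 2 + 1) := by
  have : Fact p.Prime := ⟨hp⟩
  have hn' : (n : ZMod p) ≠ 0 := by rwa [Ne, ZMod.intCast_zmod_eq_zero_iff_dvd]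
  have hshear : {v // IsUnimodular 𝔇 p v ∧ QuadCongr 𝔇 p x y n v}
      ≃ {w : (ZMod p × ZMod p) × (ZMod p × ZMod p) //
          normForm (𝔇 : ZMod p) w.1 + normForm (𝔇 : ZMod p) w.2 = n} :=
    (Equiv.subtypeEquivRight fun v ↦
      and_iff_right_of_imp (isUnimodular_of_quadCongr hns hn')).trans
      ((shearEquiv _ _).subtypeEquiv (quadCongr_iff x y n))
  have hcard : Nat.card {v // IsUnimodular 𝔇 p v ∧ QuadCongr 𝔇 p x y n v} = p ^ 3 - p := by
    rw [Nat.card_congr hshear, Nat.card_eq_fintype_card, Fintype.card_subtype,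
      card_normForm_add_normForm_eq hns hn', ZMod.card]
  refine ⟨hcard, ?_⟩
  have hp1 : (1 : ℚ) < p := by exact_mod_cast hp.one_lt
  rw [hcard, Nat.cast_sub (Nat.le_self_pow three_ne_zero p),
    div_eq_div_iff (sub_pos.2 (one_lt_pow₀ hp1 four_ne_zero)).ne' (by positivity)]
  push_cast
  ring

/-- For `𝔇 ≥ 1`, an odd prime `p ∤ 𝔇` with `−𝔇` not a square mod `p`, and integers
`x, y, n` with `p ∤ n`: the number of unimodular quadruples in `(ℤ/pℤ)⁴` satisfying the
congruence `A x² + B y² + C x + D y + E ≡ n (mod p)` equals `p³ − p`, and this count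
divided by the total number `p⁴ − 1` of unimodular pairs equals `p/(p² + 1)`. -/
theorem unimodular_solution_count_nondiv (𝔇 : ℕ) (h𝔇 : 1 ≤ 𝔇) (p : ℕ) (hp : p.Prime)
    (hodd : Odd p) (hpD : ¬ p ∣ 𝔇) (hns : ¬ IsSquare (-(𝔇 : ZMod p)))
    (x y n : ℤ) (hn : ¬ ((p : ℤ) ∣ n)) :
    Nat.card {v : ZMod p × ZMod p × ZMod p × ZMod p //
        IsUnimodular 𝔇 p v ∧ QuadCongr 𝔇 p x y n v} = p ^ 3 - p ∧
    (Nat.card {v : ZMod p × ZMod p × ZMod p × ZMod p //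
        IsUnimodular 𝔇 p v ∧ QuadCongr 𝔇 p x y n v} : ℚ) / ((p : ℚ) ^ 4 - 1)
      = (p : ℚ) / ((p : ℚ) ^ 2 + 1) :=
  unimodular_solution_count_nondiv_general 𝔇 p hp hns x y n hn
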